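/- arXiv:0901.1209 — 5 statements merged into one kernel-verified Lean document; each statement's English description precedes it below -/
import Mathlib

section
/- Let A, B, C be rings (not necessarily commutative), f : B → A and g : B → C ring homomorphisms, and φ : A → B a homomorphism of additive abelian groups such that: (i) g is surjective and the kernel of g equals the image of φ (i.e. the sequence A → B → C → 0 is exact), and (ii) the composite f ∘ φ : A → A is multiplication by a central element a ∈ A which is not a zero divisor. Then there is a unique ring homomorphism q : C → A/(a) with q ∘ g = p ∘ f (where p : A → A/(a) is the canonical projection and (a) is the two-sided ideal generated by a), and the map b ↦ (f(b), g(b)) is a ring isomorphism from B onto the fiber product A ×_{A/(a)} C taken along p and q. -/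
/-!
Exactness identifies `ker g` with `φ(A)`, and `f` maps `φ(A)` bijectively onto the ideal
`(a) = aA` (injectively because `a` is a non-zero-divisor, onto `(a)` because `a` is central).
Hence `p ∘ f` kills `ker g` and factors through the surjection `g`; an element of `B` killed by
both `f` and `g` is `φ t` with `a t = 0`, so `t = 0`; and a pair `(x, g b)` with `x ≡ f b`
mod `(a)` is hit by `b + φ t`, where `x - f b = a t`.
-/

namespace TwoSidedIdeal

theorem mem_span_singleton_of_forall_mul_comm {A : Type*} [Ring A] {a : A}
    (ha : ∀ x, a * x = x * a) {x : A} : x ∈ span {a} ↔ ∃ t, x = a * t := by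
  let I : TwoSidedIdeal A := .mk' {x | ∃ t, x = a * t} ⟨0, (mul_zero a).symm⟩
    (by rintro _ _ ⟨t, rfl⟩ ⟨u, rfl⟩; exact ⟨t + u, (mul_add a t u).symm⟩)
    (by rintro _ ⟨t, rfl⟩; exact ⟨-t, (mul_neg a t).symm⟩)
    (by rintro x _ ⟨t, rfl⟩; exact ⟨x * t, by rw [← mul_assoc, ← ha, mul_assoc]⟩)
    (by rintro _ y ⟨t, rfl⟩; exact ⟨t * y, mul_assoc a t y⟩)
  refine ⟨fun hx => ?_, ?_⟩
  · have hle : span {a} ≤ I := span_le.2 (Set.singleton_subset_iff.2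
      ((mem_mk' _ _ _ _ _ _ a).2 ⟨1, (mul_one a).symm⟩))
    exact (mem_mk' _ _ _ _ _ _ x).1 (hle hx)
  · rintro ⟨t, rfl⟩
    exact mul_mem_right _ _ _ (subset_span rfl)

theorem ringCon_mk'_eq_iff {R : Type*} [Ring R] (I : TwoSidedIdeal R) {x y : R} :
    I.ringCon.mk' x = I.ringCon.mk' y ↔ x - y ∈ I :=
  (RingCon.eq _).trans (rel_iff I x y)

end TwoSidedIdeal

theorem RingHom.existsUnique_comp_eq_of_surjective {B C D : Type*} [Ring B] [Ring C] [Ring D]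
    {g : B →+* C} (hg : Function.Surjective g) {h : B →+* D} (hker : ker g ≤ ker h) :
    ∃! q : C →+* D, q.comp g = h := by
  have hlift : (g.liftOfSurjective hg ⟨h, hker⟩).comp g = h :=
    g.liftOfSurjective_comp hg ⟨h, hker⟩
  exact ⟨_, hlift, fun q hq => (cancel_right hg).1 (hq.trans hlift.symm)⟩

section Gluing

variable {A B C : Type*} [Ring A] [Ring B] [Ring C] {f : B →+* A} {g : B →+* C} {φ : A →+ B}
  {I : TwoSidedIdeal A}

theorem ker_le_ker_mk'_comp (h_exact : ∀ b, g b = 0 → b ∈ Set.range φ)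
    (hI : ∀ t, f (φ t) ∈ I) : RingHom.ker g ≤ RingHom.ker (I.ringCon.mk'.comp f) := by
  rintro _ hb
  obtain ⟨t, rfl⟩ := h_exact _ hb
  exact (I.ringCon_mk'_eq_iff.2 (by simpa using hI t)).trans (map_zero _)

theorem injective_prod_of_exact (h_exact : ∀ b, g b = 0 → b ∈ Set.range φ)
    (hfφ : Function.Injective (f ∘ φ)) : Function.Injective (f.prod g) := by
  refine (injective_iff_map_eq_zero (f.prod g)).2 fun b hb => ?_
  obtain ⟨t, rfl⟩ := h_exact b (congrArg Prod.snd hb)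
  have ht : t = 0 := hfφ <| by simpa using congrArg Prod.fst hb
  rw [ht, map_zero]

theorem exists_eq_of_mk'_eq (hg : Function.Surjective g) (hgφ : ∀ t, g (φ t) = 0)
    (hI : ∀ y ∈ I, ∃ t, f (φ t) = y) {q : C →+* I.ringCon.Quotient}
    (hq : q.comp g = I.ringCon.mk'.comp f) {x : A} {c : C} (hxc : I.ringCon.mk' x = q c) :
    ∃ b, f b = x ∧ g b = c := by
  obtain ⟨b, rfl⟩ := hg c
  obtain ⟨t, ht⟩ := hI _ (I.ringCon_mk'_eq_iff.1 (hxc.trans (RingHom.congr_fun hq b)))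
  exact ⟨b + φ t, by rw [map_add, ht, add_sub_cancel], by rw [map_add, hgφ, add_zero]⟩

theorem bijective_codRestrict_prod (hg : Function.Surjective g)
    (h_exact : ∀ b, g b = 0 ↔ b ∈ Set.range φ) (hfφ : Function.Injective (f ∘ φ))
    (hI : ∀ y, y ∈ I ↔ ∃ t, f (φ t) = y) (q : C →+* I.ringCon.Quotient)
    (hq : q.comp g = I.ringCon.mk'.comp f) :
    Function.Bijective ((f.prod g).codRestrict
      ((I.ringCon.mk'.comp (RingHom.fst A C)).eqLocus (q.comp (RingHom.snd A C)))
      (fun b => show I.ringCon.mk' (f b) = q (g b) from (RingHom.congr_fun hq b).symm)) := by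
  refine ⟨fun b b' h => injective_prod_of_exact (fun b => (h_exact b).1) hfφ
    (congrArg Subtype.val h), ?_⟩
  rintro ⟨⟨x, c⟩, hxc⟩
  obtain ⟨b, hfb, hgb⟩ :=
    exists_eq_of_mk'_eq hg (fun t => (h_exact _).2 ⟨t, rfl⟩) (fun y => (hI y).1) hq hxc
  exact ⟨b, Subtype.ext (Prod.ext hfb hgb)⟩

end Gluing

theorem stmt0_general {A B C : Type*} [Ring A] [Ring B] [Ring C]
    (f : B →+* A) (g : B →+* C) (φ : A →+ B)
    (hg_surj : Function.Surjective g)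
    (h_exact : ∀ b : B, g b = 0 ↔ b ∈ Set.range φ)
    (a : A)
    (h_central : ∀ x : A, a * x = x * a)
    (h_mul : ∀ x : A, f (φ x) = a * x)
    (h_nzd_left : ∀ x : A, a * x = 0 → x = 0) :
    letI p : A →+* (TwoSidedIdeal.span {a}).ringCon.Quotient :=
      (TwoSidedIdeal.span {a}).ringCon.mk'
    (∃! q : C →+* (TwoSidedIdeal.span {a}).ringCon.Quotient,
        q.comp g = p.comp f) ∧
    ∀ q : C →+* (TwoSidedIdeal.span {a}).ringCon.Quotient,
      ∀ hq : q.comp g = p.comp f,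
      Function.Bijective
        ((f.prod g).codRestrict
          ((p.comp (RingHom.fst A C)).eqLocus (q.comp (RingHom.snd A C)))
          (fun b => show p (f b) = q (g b) from (RingHom.congr_fun hq b).symm)) := by
  have hI : ∀ y, y ∈ TwoSidedIdeal.span {a} ↔ ∃ t, f (φ t) = y := fun y => by
    simp only [TwoSidedIdeal.mem_span_singleton_of_forall_mul_comm h_central, h_mul, eq_comm]
  have hfφ : Function.Injective (f ∘ φ) := by
    refine (injective_iff_map_eq_zero (f.toAddMonoidHom.comp φ)).2 fun t ht => h_nzd_left t ?_
    simpa [h_mul] using ht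
  refine ⟨RingHom.existsUnique_comp_eq_of_surjective hg_surj
    (ker_le_ker_mk'_comp (fun b => (h_exact b).1) fun t => (hI _).2 ⟨t, rfl⟩), ?_⟩
  exact bijective_codRestrict_prod hg_surj h_exact hfφ hI

/-- **Lemma (gluing lemma).** Let `A, B, C` be (not necessarily commutative) rings,
`f : B → A` and `g : B → C` ring homomorphisms, and `φ : A → B` a homomorphism of
additive abelian groups such that the sequence `A → B → C → 0` is exact and
`f ∘ φ` is multiplication by a central non-zero-divisor `a ∈ A`.  Then there is a
unique ring homomorphism `q : C → A/(a)` with `q ∘ g = p ∘ f` (where `p : A → A/(a)`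
is the projection onto the quotient by the two-sided ideal generated by `a`), and
`b ↦ (f b, g b)` is a ring isomorphism of `B` onto the fiber product
`A ×_{A/(a)} C` taken along `p` and `q`. -/
theorem stmt0 {A B C : Type*} [Ring A] [Ring B] [Ring C]
    (f : B →+* A) (g : B →+* C) (φ : A →+ B)
    (hg_surj : Function.Surjective g)
    (h_exact : ∀ b : B, g b = 0 ↔ b ∈ Set.range φ)
    (a : A)
    (h_central : ∀ x : A, a * x = x * a)
    (h_mul : ∀ x : A, f (φ x) = a * x)
    (h_nzd_left : ∀ x : A, a * x = 0 → x = 0)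
    (h_nzd_right : ∀ x : A, x * a = 0 → x = 0) :
    letI p : A →+* (TwoSidedIdeal.span {a}).ringCon.Quotient :=
      (TwoSidedIdeal.span {a}).ringCon.mk'
    (∃! q : C →+* (TwoSidedIdeal.span {a}).ringCon.Quotient,
        q.comp g = p.comp f) ∧
    ∀ q : C →+* (TwoSidedIdeal.span {a}).ringCon.Quotient,
      ∀ hq : q.comp g = p.comp f,
      Function.Bijective
        ((f.prod g).codRestrict
          ((p.comp (RingHom.fst A C)).eqLocus (q.comp (RingHom.snd A C)))
          (fun b => show p (f b) = q (g b) from (RingHom.congr_fun hq b).symm)) :=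
  stmt0_general f g φ hg_surj h_exact a h_central h_mul h_nzd_left
end

section
/- Let τ be the ℚ-algebra automorphism of the polynomial ring ℚ[r, t₁, t₂] determined by τ(r) = −r, τ(t₁) = t₂, τ(t₂) = t₁. Then the subalgebra of τ-invariant polynomials equals the ℚ-subalgebra generated by the four elements u₁ = t₁ + t₂, u₂ = t₁² + t₂², u₃ = r(t₁ − t₂), and u₄ = r². -/
/-!
Let `U` be the algebra generated by `u₁, …, u₄`; it is fixed by `τ`. Since `r² = u₄`,
`r(t₁ - t₂) = u₃`, `(t₁ - t₂)² = 2u₂ - u₁²` and `t₁, t₂ = (u₁ ± (t₁ - t₂)) / 2`, the `U`-module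
`U + U·r + U·(t₁ - t₂)` is a subalgebra containing the variables, so it is everything. On it `τ`
acts by `e + f r + g (t₁ - t₂) ↦ e - f r - g (t₁ - t₂)`, so a `τ`-invariant polynomial has
vanishing odd part `f r + g (t₁ - t₂)` and lies in `U`.
-/

open MvPolynomial

/-- The ℚ-algebra endomorphism of `ℚ[r, t₁, t₂]` (`r = X 0`, `t₁ = X 1`, `t₂ = X 2`)
with `r ↦ −r`, `t₁ ↦ t₂`, `t₂ ↦ t₁`. -/
noncomputable def sigma : MvPolynomial (Fin 3) ℚ →ₐ[ℚ] MvPolynomial (Fin 3) ℚ :=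
  aeval ![-X 0, X 2, X 1]

lemma sigma_invol : sigma.comp sigma = AlgHom.id ℚ (MvPolynomial (Fin 3) ℚ) := by
  apply MvPolynomial.algHom_ext
  intro i
  fin_cases i <;> simp [sigma]

/-- The ℚ-algebra automorphism `τ` of `ℚ[r, t₁, t₂]` determined by
`τ(r) = −r`, `τ(t₁) = t₂`, `τ(t₂) = t₁`. -/
noncomputable def tau : MvPolynomial (Fin 3) ℚ ≃ₐ[ℚ] MvPolynomial (Fin 3) ℚ :=
  AlgEquiv.ofAlgHom sigma sigma sigma_invol sigma_invol

lemma tau_X_zero : tau (X 0 : MvPolynomial (Fin 3) ℚ) = -X 0 := by simp [tau, sigma]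
lemma tau_X_one : tau (X 1 : MvPolynomial (Fin 3) ℚ) = X 2 := by simp [tau, sigma]
lemma tau_X_two : tau (X 2 : MvPolynomial (Fin 3) ℚ) = X 1 := by simp [tau, sigma]

noncomputable abbrev uSubalgebra : Subalgebra ℚ (MvPolynomial (Fin 3) ℚ) :=
  Algebra.adjoin ℚ
    ({X 1 + X 2, X 1 ^ 2 + X 2 ^ 2, X 0 * (X 1 - X 2), X 0 ^ 2} :
      Set (MvPolynomial (Fin 3) ℚ))

local notation "U" => uSubalgebra

lemma generators_mem_uSubalgebra :
    (X 1 + X 2 : MvPolynomial (Fin 3) ℚ) ∈ U ∧ (X 1 ^ 2 + X 2 ^ 2 : MvPolynomial (Fin 3) ℚ) ∈ U ∧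
      (X 0 * (X 1 - X 2) : MvPolynomial (Fin 3) ℚ) ∈ U ∧ (X 0 ^ 2 : MvPolynomial (Fin 3) ℚ) ∈ U :=
  ⟨Algebra.subset_adjoin (by simp), Algebra.subset_adjoin (by simp),
    Algebra.subset_adjoin (by simp), Algebra.subset_adjoin (by simp)⟩

lemma uSubalgebra_le_equalizer_tau :
    U ≤ AlgHom.equalizer (tau : MvPolynomial (Fin 3) ℚ →ₐ[ℚ] _) (AlgHom.id ℚ _) := by
  refine Algebra.adjoin_le ?_
  simp only [Set.insert_subset_iff, Set.singleton_subset_iff, SetLike.mem_coe,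
    AlgHom.mem_equalizer, AlgEquiv.coe_toAlgHom, AlgHom.id_apply, map_add, map_pow, map_mul,
    map_sub, tau_X_zero, tau_X_one, tau_X_two]
  refine ⟨?_, ?_, ?_, ?_⟩ <;> ring

lemma tau_eq_self_of_mem_uSubalgebra {P : MvPolynomial (Fin 3) ℚ} (hP : P ∈ U) : tau P = P :=
  uSubalgebra_le_equalizer_tau hP

lemma sub_sq_mem_uSubalgebra : ((X 1 - X 2) ^ 2 : MvPolynomial (Fin 3) ℚ) ∈ U := by
  obtain ⟨hu₁, hu₂, -, -⟩ := generators_mem_uSubalgebra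
  rw [show ((X 1 - X 2) ^ 2 : MvPolynomial (Fin 3) ℚ)
      = 2 * (X 1 ^ 2 + X 2 ^ 2) - (X 1 + X 2) ^ 2 by ring]
  exact sub_mem (mul_mem (ofNat_mem _ 2) hu₂) (pow_mem hu₁ 2)

noncomputable def decompSubalgebra : Subalgebra ℚ (MvPolynomial (Fin 3) ℚ) where
  carrier := {P | ∃ e ∈ U, ∃ f ∈ U, ∃ g ∈ U, P = e + f * X 0 + g * (X 1 - X 2)}
  algebraMap_mem' q :=
    ⟨algebraMap ℚ _ q, Subalgebra.algebraMap_mem _ q, 0, zero_mem _, 0, zero_mem _, by ring⟩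
  add_mem' := by
    rintro _ _ ⟨e, he, f, hf, g, hg, rfl⟩ ⟨e', he', f', hf', g', hg', rfl⟩
    exact ⟨e + e', add_mem he he', f + f', add_mem hf hf', g + g', add_mem hg hg', by ring⟩
  mul_mem' := by
    rintro _ _ ⟨e, he, f, hf, g, hg, rfl⟩ ⟨e', he', f', hf', g', hg', rfl⟩
    obtain ⟨-, -, hu₃, hu₄⟩ := generators_mem_uSubalgebra
    refine ⟨e * e' + f * f' * X 0 ^ 2 + (f * g' + g * f') * (X 0 * (X 1 - X 2))
        + g * g' * (X 1 - X 2) ^ 2, ?_, e * f' + f * e', ?_, e * g' + g * e', ?_, by ring⟩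
    · exact add_mem (add_mem (add_mem (mul_mem he he') (mul_mem (mul_mem hf hf') hu₄))
        (mul_mem (add_mem (mul_mem hf hg') (mul_mem hg hf')) hu₃))
        (mul_mem (mul_mem hg hg') sub_sq_mem_uSubalgebra)
    · exact add_mem (mul_mem he hf') (mul_mem hf he')
    · exact add_mem (mul_mem he hg') (mul_mem hg he')

lemma decompSubalgebra_eq_top : decompSubalgebra = ⊤ := by
  rw [eq_top_iff, ← adjoin_range_X, Algebra.adjoin_le_iff]
  have hhalf : (2⁻¹ : ℚ) • (X 1 + X 2 : MvPolynomial (Fin 3) ℚ) ∈ U :=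
    Subalgebra.smul_mem _ generators_mem_uSubalgebra.1 _
  rintro _ ⟨i, rfl⟩
  fin_cases i
  · exact ⟨0, zero_mem _, 1, one_mem _, 0, zero_mem _, by simp⟩
  · refine ⟨_, hhalf, 0, zero_mem _, algebraMap ℚ _ 2⁻¹, Subalgebra.algebraMap_mem _ _, ?_⟩
    simp only [Fin.mk_one, zero_mul, add_zero, ← Algebra.smul_def]
    module
  · refine ⟨_, hhalf, 0, zero_mem _, algebraMap ℚ _ (-2⁻¹), Subalgebra.algebraMap_mem _ _, ?_⟩
    simp only [Fin.reduceFinMk, zero_mul, add_zero, ← Algebra.smul_def]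
    module

lemma tau_decomp {e f g : MvPolynomial (Fin 3) ℚ} (he : e ∈ U) (hf : f ∈ U) (hg : g ∈ U) :
    tau (e + f * X 0 + g * (X 1 - X 2)) = e - (f * X 0 + g * (X 1 - X 2)) := by
  simp only [map_add, map_mul, map_sub, tau_X_zero, tau_X_one, tau_X_two,
    tau_eq_self_of_mem_uSubalgebra he, tau_eq_self_of_mem_uSubalgebra hf,
    tau_eq_self_of_mem_uSubalgebra hg]
  ring

/-- The subalgebra of `τ`-invariant polynomials in `ℚ[r, t₁, t₂]` is generated over ℚ
by `u₁ = t₁ + t₂`, `u₂ = t₁² + t₂²`, `u₃ = r(t₁ − t₂)` and `u₄ = r²`. -/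
theorem stmt4 :
    ∀ P : MvPolynomial (Fin 3) ℚ,
      tau P = P ↔
        P ∈ Algebra.adjoin ℚ
          ({X 1 + X 2, X 1 ^ 2 + X 2 ^ 2, X 0 * (X 1 - X 2), X 0 ^ 2} :
            Set (MvPolynomial (Fin 3) ℚ)) := by
  intro P
  refine ⟨fun hP => ?_, tau_eq_self_of_mem_uSubalgebra⟩
  obtain ⟨e, he, f, hf, g, hg, rfl⟩ : P ∈ decompSubalgebra :=
    decompSubalgebra_eq_top ▸ Algebra.mem_top
  rw [tau_decomp he hf hg] at hP
  have hodd : f * X 0 + g * (X 1 - X 2) = 0 :=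
    CharZero.eq_neg_self_iff.mp (by linear_combination -hP)
  rwa [add_assoc, hodd, add_zero]
end

section
/- Let ψ : ℚ[x₁, x₂, x₃, x₄] → ℚ[r, t₁, t₂] be the ℚ-algebra homomorphism determined by x₁ ↦ −(t₁ + t₂), x₂ ↦ −(t₁² + t₂²), x₃ ↦ (t₁ − r)(t₂ + r), x₄ ↦ r(t₁ − t₂). Then the kernel of ψ is the principal ideal generated by the polynomial (2x₄ + (2x₂ + x₁²))² − (2x₂ + x₁²)(4x₃ − x₁²). -/
/-!
Affine substitutions of `x₁, …, x₄` and of `r, t₁, t₂`, invertible as soon as `2` is, conjugate `ψ`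
into the parametrisation `(r, s, t) ↦ (r, s², t², s t)` of the quadric cone `x₄² = x₂ x₃`; for
instance `ψ(2x₂ + x₁²) = -(t₁ - t₂)²`. The kernel of the parametrisation is generated by
`x₄² - x₂ x₃`: modulo this quadric, which is monic in `x₄`, every polynomial is `P + x₄ Q` with
`P, Q` free of `x₄`, and the image `P(r, s², t²) + s t Q(r, s², t²)` splits into its parts even and
odd in `s`, so it vanishes only if `P = Q = 0`, substituting squares being injective.
-/

open MvPolynomial

lemma AlgHom.ker_eq_span_singleton_of_comp_eq {S A A₀ B B₀ : Type*} [CommRing S] [CommRing A]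
    [CommRing A₀] [CommRing B] [CommRing B₀] [Algebra S A] [Algebra S A₀] [Algebra S B]
    [Algebra S B₀] {f : A →ₐ[S] B} {f₀ : A₀ →ₐ[S] B₀} {α : A₀ →ₐ[S] A} {β : B₀ →ₐ[S] B}
    (hα : Function.Surjective α) (hβ : Function.Injective β) (h : f.comp α = β.comp f₀)
    {g₀ : A₀} (h₀ : RingHom.ker f₀ = Ideal.span {g₀}) : RingHom.ker f = Ideal.span {α g₀} := by
  rw [← Ideal.map_comap_of_surjective α hα (RingHom.ker f), AlgHom.comap_ker, h,
    show RingHom.ker (β.comp f₀) = RingHom.ker f₀ from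
      RingHom.ker_comp_of_injective (f₀ : A₀ →+* B₀) hβ,
    h₀, Ideal.map_span, Set.image_singleton]

namespace MvPolynomial

variable {R : Type*} [CommRing R]

lemma exists_eq_mul_add_rename_add_X_last_mul {n : ℕ} (c : MvPolynomial (Fin n) R)
    (F : MvPolynomial (Fin (n + 1)) R) :
    ∃ q P Q, F = (X (Fin.last n) ^ 2 - rename Fin.castSucc c) * q + rename Fin.castSucc P
      + X (Fin.last n) * rename Fin.castSucc Q := by
  induction F using MvPolynomial.induction_on with
  | C a => exact ⟨0, C a, 0, by simp⟩
  | add F G hF hG =>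
    obtain ⟨q, P, Q, rfl⟩ := hF
    obtain ⟨q', P', Q', rfl⟩ := hG
    exact ⟨q + q', P + P', Q + Q', by simp only [map_add]; ring⟩
  | mul_X F i hF =>
    obtain ⟨q, P, Q, rfl⟩ := hF
    induction i using Fin.lastCases with
    | last =>
      exact ⟨q * X (Fin.last n) + rename Fin.castSucc Q, c * Q, P, by simp only [map_mul]; ring⟩
    | cast i =>
      exact ⟨q * X i.castSucc, P * X i, Q * X i, by simp only [map_mul, rename_X]; ring⟩

lemma C_invOf_two_mul_two {σ : Type*} [Invertible (2 : R)] :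
    (C (⅟2 : R) : MvPolynomial σ R) * 2 = 1 := by
  rw [← map_ofNat C 2, ← C_mul, invOf_mul_self, C_1]

variable (R) in
noncomputable def squareSubst : MvPolynomial (Fin 3) R →ₐ[R] MvPolynomial (Fin 3) R :=
  aeval ![X 0, X 1 ^ 2, X 2 ^ 2]

variable (R) in
noncomputable def coneParam : MvPolynomial (Fin 4) R →ₐ[R] MvPolynomial (Fin 3) R :=
  aeval ![X 0, X 1 ^ 2, X 2 ^ 2, X 1 * X 2]

lemma squareSubst_injective : Function.Injective (squareSubst R) := by
  have h : (aeval ![X 0 ^ 2, X 1, X 2]).comp (squareSubst R) = expand 2 := by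
    ext i : 1; fin_cases i <;> simp [squareSubst]
  have hinj := expand_injective (σ := Fin 3) (R := R) two_pos
  rw [← h, AlgHom.coe_comp] at hinj
  exact hinj.of_comp

lemma eq_zero_of_squareSubst_add_X_mul_X_mul_eq_zero [Invertible (2 : R)]
    {P Q : MvPolynomial (Fin 3) R} (h : squareSubst R P + X 1 * X 2 * squareSubst R Q = 0) :
    P = 0 ∧ Q = 0 := by
  set τ : MvPolynomial (Fin 3) R →ₐ[R] MvPolynomial (Fin 3) R := aeval ![X 0, -X 1, X 2]
  have hτ : ∀ S, τ (squareSubst R S) = squareSubst R S := fun S => by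
    rw [← AlgHom.comp_apply]
    congr 1
    ext i : 1; fin_cases i <;> simp [squareSubst, τ]
  have hodd : squareSubst R P - X 1 * X 2 * squareSubst R Q = 0 := by
    have := congr(τ $h)
    rw [map_add, map_mul, map_mul, hτ, hτ, map_zero, show τ (X 1) = -X 1 by simp [τ],
      show τ (X 2) = X 2 by simp [τ]] at this
    linear_combination this
  have hP : squareSubst R P = 0 := by
    linear_combination (C (⅟2 : R) : MvPolynomial (Fin 3) R) * (h + hodd) -
      squareSubst R P * C_invOf_two_mul_two (R := R) (σ := Fin 3)
  have hQ : squareSubst R Q = 0 :=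
    ((isRegular_X (n := 1)).mul (isRegular_X (n := 2))).left.mul_left_eq_zero_iff.1
      (by linear_combination h - hP)
  exact ⟨squareSubst_injective (hP.trans (map_zero _).symm),
    squareSubst_injective (hQ.trans (map_zero _).symm)⟩

lemma ker_coneParam [Invertible (2 : R)] :
    RingHom.ker (coneParam R) = Ideal.span {X 3 ^ 2 - X 1 * X 2} := by
  have hg : coneParam R (X 3 ^ 2 - X 1 * X 2) = 0 := by simp [coneParam]; ring
  refine le_antisymm (fun F hF => ?_) (by simpa [Ideal.span_le] using hg)
  obtain ⟨q, P, Q, rfl⟩ := exists_eq_mul_add_rename_add_X_last_mul (X 1 * X 2) F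
  have hc : (X (Fin.last 3) ^ 2 - rename Fin.castSucc (X 1 * X 2) : MvPolynomial (Fin 4) R) =
      X 3 ^ 2 - X 1 * X 2 := by
    simp only [map_mul, rename_X]; rfl
  have hren : ∀ S, coneParam R (rename Fin.castSucc S) = squareSubst R S := fun S => by
    rw [← AlgHom.comp_apply]
    congr 1
    ext i : 1; fin_cases i <;> simp [coneParam, squareSubst]
  rw [hc, RingHom.mem_ker, map_add, map_add, map_mul, map_mul, hg, zero_mul, zero_add, hren, hren,
    show coneParam R (X (Fin.last 3)) = X 1 * X 2 by simp [coneParam]] at hF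
  obtain ⟨rfl, rfl⟩ := eq_zero_of_squareSubst_add_X_mul_X_mul_eq_zero hF
  simpa [hc] using Ideal.mul_mem_right q _ (Ideal.mem_span_singleton_self _)

variable (R) in
noncomputable def sourceCoordChange : MvPolynomial (Fin 4) R →ₐ[R] MvPolynomial (Fin 4) R :=
  aeval ![-X 0, -(2 * X 1 + X 0 ^ 2), X 0 ^ 2 - 4 * X 2, -(2 * X 3 + 2 * X 1 + X 0 ^ 2)]

variable (R) in
noncomputable def targetCoordChange : MvPolynomial (Fin 3) R →ₐ[R] MvPolynomial (Fin 3) R :=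
  aeval ![X 1 + X 2, X 1 - X 2, X 1 - X 2 - 2 * X 0]

lemma sourceCoordChange_surjective [Invertible (2 : R)] :
    Function.Surjective (sourceCoordChange R) := by
  let inv : MvPolynomial (Fin 4) R →ₐ[R] MvPolynomial (Fin 4) R :=
    aeval ![-X 0, -(C ⅟2 * (X 1 + X 0 ^ 2)), -(C ⅟2 ^ 2 * (X 2 - X 0 ^ 2)),
      -(C ⅟2 * (X 3 - X 1))]
  have half : (C ⅟2 : MvPolynomial (Fin 4) R) * 2 = 1 := C_invOf_two_mul_two
  have h : (sourceCoordChange R).comp inv = AlgHom.id R _ := by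
    ext i : 1
    fin_cases i <;> simp [sourceCoordChange, inv]
    · linear_combination X 1 * half
    · linear_combination X 2 * (C ⅟2 * 2 + 1) * half
    · linear_combination X 3 * half
  exact fun F => ⟨inv F, by rw [← AlgHom.comp_apply, h, AlgHom.id_apply]⟩

lemma targetCoordChange_injective [Invertible (2 : R)] :
    Function.Injective (targetCoordChange R) := by
  let inv : MvPolynomial (Fin 3) R →ₐ[R] MvPolynomial (Fin 3) R :=
    aeval ![C ⅟2 * (X 1 - X 2), C ⅟2 * (X 0 + X 1), C ⅟2 * (X 0 - X 1)]
  have half : (C ⅟2 : MvPolynomial (Fin 3) R) * 2 = 1 := C_invOf_two_mul_two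
  have h : inv.comp (targetCoordChange R) = AlgHom.id R _ := by
    ext i : 1
    fin_cases i <;> simp [targetCoordChange, inv, map_ofNat]
    · linear_combination X 0 * half
    · linear_combination X 1 * half
    · linear_combination X 2 * half
  exact Function.LeftInverse.injective (g := inv) fun F => by
    rw [← AlgHom.comp_apply, h, AlgHom.id_apply]

theorem ker_aeval_eq_span_singleton [Invertible (2 : R)] :
    RingHom.ker
        (aeval
          ![-(X 1 + X 2), -(X 1 ^ 2 + X 2 ^ 2), (X 1 - X 0) * (X 2 + X 0),
            X 0 * (X 1 - X 2)] :
          MvPolynomial (Fin 4) R →ₐ[R] MvPolynomial (Fin 3) R) =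
      Ideal.span
        {(2 * X 3 + (2 * X 1 + X 0 ^ 2)) ^ 2 -
          (2 * X 1 + X 0 ^ 2) * (4 * X 2 - X 0 ^ 2)} := by
  have hcomm : (aeval ![-(X 1 + X 2), -(X 1 ^ 2 + X 2 ^ 2), (X 1 - X 0) * (X 2 + X 0),
      X 0 * (X 1 - X 2)]).comp (sourceCoordChange R) =
      (targetCoordChange R).comp (coneParam R) := by
    ext i : 1
    fin_cases i <;> simp [sourceCoordChange, targetCoordChange, coneParam, map_ofNat] <;> ring
  have hg : sourceCoordChange R (X 3 ^ 2 - X 1 * X 2) =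
      (2 * X 3 + (2 * X 1 + X 0 ^ 2)) ^ 2 - (2 * X 1 + X 0 ^ 2) * (4 * X 2 - X 0 ^ 2) := by
    simp [sourceCoordChange]; ring
  rw [← hg]
  exact AlgHom.ker_eq_span_singleton_of_comp_eq sourceCoordChange_surjective
    targetCoordChange_injective hcomm ker_coneParam

end MvPolynomial

-- `x₁, …, x₄` are `X 0, …, X 3` and `r, t₁, t₂` are `X 0, X 1, X 2`.
/-- Let `ψ : ℚ[x₁, x₂, x₃, x₄] → ℚ[r, t₁, t₂]` be the ℚ-algebra homomorphism with
`x₁ ↦ −(t₁ + t₂)`, `x₂ ↦ −(t₁² + t₂²)`, `x₃ ↦ (t₁ − r)(t₂ + r)`, `x₄ ↦ r(t₁ − t₂)`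
(here `x₁ = X 0, …, x₄ = X 3` and `r = X 0`, `t₁ = X 1`, `t₂ = X 2`).  Its kernel is
the principal ideal generated by `(2x₄ + (2x₂ + x₁²))² − (2x₂ + x₁²)(4x₃ − x₁²)`. -/
theorem stmt5 :
    RingHom.ker
        (aeval
          ![-(X 1 + X 2), -(X 1 ^ 2 + X 2 ^ 2), (X 1 - X 0) * (X 2 + X 0),
            X 0 * (X 1 - X 2)] :
          MvPolynomial (Fin 4) ℚ →ₐ[ℚ] MvPolynomial (Fin 3) ℚ) =
      Ideal.span
        {(2 * X 3 + (2 * X 1 + X 0 ^ 2)) ^ 2 -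
          (2 * X 1 + X 0 ^ 2) * (4 * X 2 - X 0 ^ 2)} :=
  ker_aeval_eq_span_singleton
end

section
/- The polynomial (2x₄ + (2x₂ + x₁²))² − (2x₂ + x₁²)(4x₃ − x₁²) is irreducible in the polynomial ring ℚ[x₁, x₂, x₃, x₄]. -/
/-!
Write `A = 2x₂ + x₁²`. The polynomial is linear in `x₃`: it equals
`-4A · x₃ + ((2x₄ + A)² + A x₁²)`, and neither coefficient involves `x₃`. Such a polynomial is
irreducible as soon as its two coefficients are coprime. A common prime factor of `A` and
`(2x₄ + A)² + A x₁²` divides `(2x₄)²`, hence is associated to the prime `x₄`; but `x₄ ∤ A`, since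
`A` does not vanish at `x₁ = x₄ = 0, x₂ = 1`.
-/

open MvPolynomial

lemma MvPolynomial.isUnit_ofNat {σ K : Type*} [Field K] (n : ℕ) [n.AtLeastTwo]
    (hn : (ofNat(n) : K) ≠ 0) : IsUnit (ofNat(n) : MvPolynomial σ K) := by
  rw [← map_ofNat C n]
  exact (isUnit_iff_ne_zero.mpr hn).map C

lemma MvPolynomial.notMem_vars_of_mem_supported {σ R : Type*} [CommSemiring R]
    {p : MvPolynomial σ R} {i : σ} (h : p ∈ supported R {i}ᶜ) : i ∉ p.vars :=
  fun hi => mem_supported.mp h hi rfl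

local notation "A" => (2 * X 1 + X 0 ^ 2 : MvPolynomial (Fin 4) ℚ)

lemma X_three_not_dvd : ¬ X 3 ∣ A := by
  intro h
  simpa using map_dvd (eval ![0, 1, 0, 0]) h

lemma isRelPrime_coeffs : IsRelPrime (-4 * A) ((2 * X 3 + A) ^ 2 + A * X 0 ^ 2) := by
  have hX : IsRelPrime A (X 3) :=
    (X_prime.irreducible.isRelPrime_iff_not_dvd.mpr X_three_not_dvd).symm
  rw [← isRelPrime_mul_unit_left_right (isUnit_ofNat 2 two_ne_zero)] at hX
  rw [isRelPrime_mul_unit_left_left (by simpa using isUnit_ofNat 4 four_ne_zero)]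
  refine (IsRelPrime.pow_right ?_).add_mul_left_right _
  simpa using hX.add_mul_left_right 1

/-- The polynomial `(2x₄ + (2x₂ + x₁²))² − (2x₂ + x₁²)(4x₃ − x₁²)` is irreducible in
`ℚ[x₁, x₂, x₃, x₄]` (here `x₁ = X 0`, `x₂ = X 1`, `x₃ = X 2`, `x₄ = X 3`). -/
theorem stmt6 :
    Irreducible
      ((2 * X 3 + (2 * X 1 + X 0 ^ 2)) ^ 2 -
          (2 * X 1 + X 0 ^ 2) * (4 * X 2 - X 0 ^ 2) :
        MvPolynomial (Fin 4) ℚ) := by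
  have hlinear : (2 * X 3 + A) ^ 2 - A * (4 * X 2 - X 0 ^ 2) =
      -4 * A * X 2 + ((2 * X 3 + A) ^ 2 + A * X 0 ^ 2) := by
    ring
  rw [hlinear]
  refine irreducible_mul_X_add _ _ _ ?_ ?_ ?_ isRelPrime_coeffs
  · intro h
    simpa using congrArg (eval ![0, 1, 0, 0]) h
  all_goals
    apply notMem_vars_of_mem_supported
    apply_rules [Subalgebra.add_mem, Subalgebra.pow_mem, Subalgebra.mul_mem, Subalgebra.neg_mem,
      ofNat_mem, X_mem_supported.mpr] <;> decide
end

section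
/- Let ψ : ℚ[u₁, u₂, u₃, u₄, u₅] → ℚ[v₁, v₂, v₃, v₄] be the ℚ-algebra homomorphism determined by u₁ ↦ v₁ + v₂, u₂ ↦ v₃ + v₄, u₃ ↦ v₁² + v₂², u₄ ↦ v₃² + v₄², u₅ ↦ v₁v₄ + v₂v₃. Then the kernel of ψ is the principal ideal generated by the polynomial 2u₃u₄ + 2u₁u₂u₅ − u₂²u₃ − u₁²u₄ − 2u₅². -/
/-!
Modulo the generator `f`, whose coefficient of `u₅²` is the unit `-2`, every polynomial is
congruent to some `A + B u₅` with `A, B ∈ ℚ[u₁, …, u₄]`. On `ℚ[u₁, …, u₄]` the map `ψ` is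
injective: each `vᵢ` is a root of `T² - (vᵢ + vⱼ) T + vᵢ vⱼ`, where
`vᵢ vⱼ = ((vᵢ + vⱼ)² - (vᵢ² + vⱼ²)) / 2`, so `ℚ[v₁, …, v₄]` is algebraic over the image, and
four elements over which a ring of transcendence degree four is algebraic are algebraically
independent. Finally, if `ψ A + ψ B (v₁v₄ + v₂v₃) = 0`, the swap `v₁ ↔ v₂` fixes `ψ A` and
`ψ B`; subtracting the swapped relation gives `ψ B (v₁ - v₂)(v₄ - v₃) = 0`, hence `B = 0` and
then `A = 0`.
-/

open MvPolynomial

theorem isIntegral_of_add_mem_of_mul_mem {R A : Type*} [CommRing R] [CommRing A] [Algebra R A]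
    {S : Subalgebra R A} {a b : A} (hs : a + b ∈ S) (hp : a * b ∈ S) : IsIntegral S a := by
  refine ⟨Polynomial.X ^ 2 - Polynomial.C ⟨a + b, hs⟩ * Polynomial.X + Polynomial.C ⟨a * b, hp⟩,
    ?_, ?_⟩
  · monicity!
  · simp only [Polynomial.eval₂_add, Polynomial.eval₂_sub, Polynomial.eval₂_X_pow,
      Polynomial.eval₂_mul, Polynomial.eval₂_C, Polynomial.eval₂_X, Subalgebra.algebraMap_apply]
    ring

theorem isIntegral_of_add_mem_of_sq_add_sq_mem {R A : Type*} [CommRing R] [CommRing A]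
    [Algebra R A] [Invertible (2 : R)] {S : Subalgebra R A} {a b : A} (hs : a + b ∈ S)
    (hq : a ^ 2 + b ^ 2 ∈ S) : IsIntegral S a := by
  refine isIntegral_of_add_mem_of_mul_mem hs ?_
  have h2 : (a + b) ^ 2 - (a ^ 2 + b ^ 2) = (2 : R) • (a * b) := by rw [two_smul]; ring
  have hab : a * b = ⅟(2 : R) • ((a + b) ^ 2 - (a ^ 2 + b ^ 2)) := by
    rw [h2, smul_smul, invOf_mul_self, one_smul]
  rw [hab]
  exact S.smul_mem (S.sub_mem (S.pow_mem hs 2) hq) _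

theorem MvPolynomial.algebra_isIntegral_of_isIntegral_X {R σ : Type*} [CommRing R]
    {S : Subalgebra R (MvPolynomial σ R)} (h : ∀ i, IsIntegral S (X i : MvPolynomial σ R)) :
    Algebra.IsIntegral S (MvPolynomial σ R) := by
  refine ⟨fun p => ?_⟩
  induction p using MvPolynomial.induction_on with
  | C a =>
    rw [← algebraMap_eq, IsScalarTower.algebraMap_apply R S]
    exact isIntegral_algebraMap
  | add p q hp hq => exact hp.add hq
  | mul_X p i hp => exact hp.mul (h i)

theorem MvPolynomial.aeval_injective_of_isAlgebraic {K ι : Type*} [Field K] [Finite ι]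
    (y : ι → MvPolynomial ι K)
    [Algebra.IsAlgebraic (Algebra.adjoin K (Set.range y)) (MvPolynomial ι K)] :
    Function.Injective (aeval (R := K) y) :=
  (Algebra.IsAlgebraic.isTranscendenceBasis_of_lift_le_trdeg_of_finite K y
    (A := MvPolynomial ι K) (by simp)).1

noncomputable def pairPowerSums : Fin 4 → MvPolynomial (Fin 4) ℚ :=
  ![X 0 + X 1, X 2 + X 3, X 0 ^ 2 + X 1 ^ 2, X 2 ^ 2 + X 3 ^ 2]

theorem isAlgebraic_adjoin_pairPowerSums :
    Algebra.IsAlgebraic (Algebra.adjoin ℚ (Set.range pairPowerSums))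
      (MvPolynomial (Fin 4) ℚ) := by
  set S := Algebra.adjoin ℚ (Set.range pairPowerSums)
  have mem (i : Fin 4) : pairPowerSums i ∈ S := Algebra.subset_adjoin ⟨i, rfl⟩
  have mem' {a b : MvPolynomial (Fin 4) ℚ} (h : a + b ∈ S) : b + a ∈ S := add_comm a b ▸ h
  suffices Algebra.IsIntegral S (MvPolynomial (Fin 4) ℚ) from inferInstance
  refine algebra_isIntegral_of_isIntegral_X fun i => ?_
  fin_cases i
  · exact isIntegral_of_add_mem_of_sq_add_sq_mem (mem 0) (mem 2)
  · exact isIntegral_of_add_mem_of_sq_add_sq_mem (mem' (mem 0)) (mem' (mem 2))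
  · exact isIntegral_of_add_mem_of_sq_add_sq_mem (mem 1) (mem 3)
  · exact isIntegral_of_add_mem_of_sq_add_sq_mem (mem' (mem 1)) (mem' (mem 3))

theorem aeval_pairPowerSums_injective : Function.Injective (aeval (R := ℚ) pairPowerSums) :=
  have := isAlgebraic_adjoin_pairPowerSums
  aeval_injective_of_isAlgebraic pairPowerSums

theorem rename_swap_aeval_pairPowerSums (q : MvPolynomial (Fin 4) ℚ) :
    rename (Equiv.swap 0 1) (aeval (R := ℚ) pairPowerSums q) =
      aeval (R := ℚ) pairPowerSums q := by
  rw [← AlgHom.comp_apply]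
  congr 1
  refine algHom_ext fun i => ?_
  fin_cases i <;> simp [pairPowerSums, Equiv.swap_apply_of_ne_of_ne, add_comm]

theorem MvPolynomial.exists_linear_in_last_sub_mem {R : Type*} [CommRing R] {n : ℕ}
    {I : Ideal (MvPolynomial (Fin (n + 1)) R)} (a b : MvPolynomial (Fin n) R)
    (h : X (Fin.last n) ^ 2 -
      (rename Fin.castSucc a + rename Fin.castSucc b * X (Fin.last n)) ∈ I)
    (p : MvPolynomial (Fin (n + 1)) R) :
    ∃ A B : MvPolynomial (Fin n) R,
      p - (rename Fin.castSucc A + rename Fin.castSucc B * X (Fin.last n)) ∈ I := by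
  induction p using MvPolynomial.induction_on with
  | C c => exact ⟨C c, 0, by simp⟩
  | add p q hp hq =>
    obtain ⟨A, B, hAB⟩ := hp
    obtain ⟨A', B', hAB'⟩ := hq
    refine ⟨A + A', B + B', ?_⟩
    convert I.add_mem hAB hAB' using 1
    simp only [map_add]
    ring
  | mul_X p i hp =>
    obtain ⟨A, B, hAB⟩ := hp
    induction i using Fin.lastCases with
    | last =>
      refine ⟨B * a, A + B * b, ?_⟩
      convert I.add_mem (I.mul_mem_right (X (Fin.last n)) hAB)
        (I.mul_mem_left (rename Fin.castSucc B) h) using 1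
      simp only [map_add, map_mul]
      ring
    | cast j =>
      refine ⟨A * X j, B * X j, ?_⟩
      convert I.mul_mem_right (X (Fin.castSucc j)) hAB using 1
      simp only [map_mul, rename_X]
      ring

noncomputable def ψ : MvPolynomial (Fin 5) ℚ →ₐ[ℚ] MvPolynomial (Fin 4) ℚ :=
  aeval ![X 0 + X 1, X 2 + X 3, X 0 ^ 2 + X 1 ^ 2, X 2 ^ 2 + X 3 ^ 2, X 0 * X 3 + X 1 * X 2]

noncomputable def kernelGenerator : MvPolynomial (Fin 5) ℚ :=
  2 * X 2 * X 3 + 2 * X 0 * X 1 * X 4 - X 1 ^ 2 * X 2 - X 0 ^ 2 * X 3 - 2 * X 4 ^ 2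

theorem ψ_kernelGenerator : ψ kernelGenerator = 0 := by
  simp only [ψ, kernelGenerator, map_add, map_sub, map_mul, map_pow, map_ofNat, aeval_X,
    Matrix.cons_val]
  ring

theorem ψ_rename_castSucc (q : MvPolynomial (Fin 4) ℚ) :
    ψ (rename Fin.castSucc q) = aeval (R := ℚ) pairPowerSums q := by
  rw [ψ, aeval_rename]
  congr 2
  ext i
  fin_cases i <;> rfl

theorem ψ_X_last : ψ (X (Fin.last 4)) = X 0 * X 3 + X 1 * X 2 := by
  simp [ψ]

theorem sq_sub_mem_span_kernelGenerator :
    X (Fin.last 4) ^ 2 -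
        (rename Fin.castSucc (X 2 * X 3 - C 2⁻¹ * (X 1 ^ 2 * X 2 + X 0 ^ 2 * X 3)) +
          rename Fin.castSucc (X 0 * X 1) * X (Fin.last 4)) ∈
      Ideal.span {kernelGenerator} := by
  rw [Ideal.mem_span_singleton']
  refine ⟨-C 2⁻¹, ?_⟩
  have hC : (C 2⁻¹ : MvPolynomial (Fin 5) ℚ) * 2 = 1 := by
    rw [← map_ofNat C 2, ← map_mul, inv_mul_cancel₀ two_ne_zero, map_one]
  simp only [kernelGenerator, map_add, map_sub, map_mul, map_pow, rename_X, rename_C,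
    Fin.reduceCastSucc, Fin.reduceLast]
  linear_combination (X 4 ^ 2 - X 2 * X 3 - X 0 * X 1 * X 4) * hC

theorem eq_zero_of_ψ_linear_in_last_eq_zero {A B : MvPolynomial (Fin 4) ℚ}
    (h : ψ (rename Fin.castSucc A + rename Fin.castSucc B * X (Fin.last 4)) = 0) :
    A = 0 ∧ B = 0 := by
  rw [map_add, map_mul, ψ_rename_castSucc, ψ_rename_castSucc, ψ_X_last] at h
  have h' := congrArg (rename (Equiv.swap (0 : Fin 4) 1)) h
  simp only [map_add, map_mul, map_zero, rename_swap_aeval_pairPowerSums, rename_X,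
    Equiv.swap_apply_left, Equiv.swap_apply_right,
    Equiv.swap_apply_of_ne_of_ne (by decide : (2 : Fin 4) ≠ 0) (by decide : (2 : Fin 4) ≠ 1),
    Equiv.swap_apply_of_ne_of_ne (by decide : (3 : Fin 4) ≠ 0) (by decide : (3 : Fin 4) ≠ 1)]
    at h'
  have hB : aeval (R := ℚ) pairPowerSums B * ((X 0 - X 1) * (X 3 - X 2)) = 0 := by
    linear_combination h - h'
  have hX {i j : Fin 4} (hij : i ≠ j) : (X i - X j : MvPolynomial (Fin 4) ℚ) ≠ 0 :=
    sub_ne_zero.mpr (X_injective.ne hij)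
  have hB0 : B = 0 := aeval_pairPowerSums_injective <| by
    simpa [hX (by decide : (0 : Fin 4) ≠ 1), hX (by decide : (3 : Fin 4) ≠ 2)] using hB
  refine ⟨aeval_pairPowerSums_injective ?_, hB0⟩
  simpa [hB0] using h

/-- Let `ψ : ℚ[u₁, u₂, u₃, u₄, u₅] → ℚ[v₁, v₂, v₃, v₄]` be the ℚ-algebra homomorphism
with `u₁ ↦ v₁ + v₂`, `u₂ ↦ v₃ + v₄`, `u₃ ↦ v₁² + v₂²`, `u₄ ↦ v₃² + v₄²`,
`u₅ ↦ v₁v₄ + v₂v₃` (here `u₁ = X 0, …, u₅ = X 4` and `v₁ = X 0, …, v₄ = X 3`).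
Its kernel is the principal ideal generated by
`2u₃u₄ + 2u₁u₂u₅ − u₂²u₃ − u₁²u₄ − 2u₅²`. -/
theorem stmt13 :
    RingHom.ker
        (aeval
          ![X 0 + X 1, X 2 + X 3, X 0 ^ 2 + X 1 ^ 2, X 2 ^ 2 + X 3 ^ 2,
            X 0 * X 3 + X 1 * X 2] :
          MvPolynomial (Fin 5) ℚ →ₐ[ℚ] MvPolynomial (Fin 4) ℚ) =
      Ideal.span
        ({2 * X 2 * X 3 + 2 * X 0 * X 1 * X 4 - X 1 ^ 2 * X 2 - X 0 ^ 2 * X 3 -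
            2 * X 4 ^ 2} : Set (MvPolynomial (Fin 5) ℚ)) := by
  change RingHom.ker ψ = Ideal.span {kernelGenerator}
  have span_le_ker : Ideal.span {kernelGenerator} ≤ RingHom.ker ψ :=
    (Ideal.span_singleton_le_iff_mem _).mpr ψ_kernelGenerator
  refine le_antisymm (fun p hp => ?_) span_le_ker
  obtain ⟨A, B, hAB⟩ :=
    exists_linear_in_last_sub_mem _ _ sq_sub_mem_span_kernelGenerator p
  have hψ : ψ (rename Fin.castSucc A + rename Fin.castSucc B * X (Fin.last 4)) = 0 := by
    have := span_le_ker hAB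
    rwa [RingHom.mem_ker, map_sub, RingHom.mem_ker.mp hp, zero_sub, neg_eq_zero] at this
  obtain ⟨rfl, rfl⟩ := eq_zero_of_ψ_linear_in_last_eq_zero hψ
  simpa using hAB
end
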